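/- arXiv:2008.01379 — 2 statements merged into one kernel-verified Lean document; each statement's English description precedes it below -/
import Mathlib

section
/- Let S be a Γ-graded semigroup with local units. Then there is an isomorphism of categories F_# : Gr-S → Mod-(S#Γ) such that for every α ∈ Γ the diagram F_# ∘ T_α = T_α ∘ F_# commutes, where T_α denotes the α-shift functor on Gr-S and the corresponding shift functor on Mod-(S#Γ). (On objects, F_# sends a Γ-graded unital left S-set X to X with the S#Γ-action (sP_α)x = sx if x ∈ X_α and 0 otherwise; morphisms are sent to themselves.) -/
open CategoryTheory

universe u v w

/-- A `Γ`-grading on a semigroup with zero `S`. -/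
structure Grading (Γ : Type u) [Group Γ] (S : Type w) [SemigroupWithZero S] :
    Type max u w where
  deg : S → Γ
  deg_mul : ∀ s t : S, s * t ≠ 0 → deg (s * t) = deg s * deg t

/-- `S` has local units. -/
def HasLocalUnits (S : Type w) [SemigroupWithZero S] : Prop :=
  ∀ s : S, ∃ u v : S, u * u = u ∧ v * v = v ∧ u * s = s ∧ s * v = s

/-- The underlying set of the smash product `S#Γ`. -/
abbrev Smash (Γ : Type u) (S : Type w) [SemigroupWithZero S] : Type max u w :=
  Option ({ s : S // s ≠ 0 } × Γ)

open Classical in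
/-- Multiplication in the smash product `S#Γ`. -/
noncomputable def smashMul {Γ : Type u} [Group Γ] {S : Type w} [SemigroupWithZero S]
    (g : Grading Γ S) (a b : Smash Γ S) : Smash Γ S :=
  a.bind fun p => b.bind fun q =>
    if h : p.1.1 * q.1.1 ≠ 0 ∧ g.deg q.1.1 = p.2 * q.2⁻¹ then
      some (⟨p.1.1 * q.1.1, h.1⟩, q.2)
    else none

variable {Γ : Type u} [Group Γ] {S : Type w} [SemigroupWithZero S]

/-- An object of `Gr-S`: a unital pointed `Γ`-graded left `S`-set. -/
structure GrMod (g : Grading Γ S) : Type max u w (v + 1) where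
  X : Type v
  zero : X
  act : S → X → X
  act_mul : ∀ (s t : S) (x : X), act s (act t x) = act (s * t) x
  act_zero : ∀ x : X, act 0 x = zero
  unital : ∀ x : X, ∃ (s : S) (y : X), act s y = x
  degX : {x : X // x ≠ zero} → Γ
  deg_act : ∀ (s : S) (x : X) (hx : x ≠ zero) (h : act s x ≠ zero),
      degX ⟨act s x, h⟩ = g.deg s * degX ⟨x, hx⟩

/-- A morphism of `Gr-S`: a graded `S`-map. -/
structure GrHom {g : Grading Γ S} (A B : GrMod.{u, v, w} g) : Type v where
  f : A.X → B.X
  map_act : ∀ (s : S) (x : A.X), f (A.act s x) = B.act s (f x)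
  graded : ∀ (x : A.X) (hx : x ≠ A.zero) (hfx : f x ≠ B.zero),
      B.degX ⟨f x, hfx⟩ = A.degX ⟨x, hx⟩

theorem GrHom.map_zero {g : Grading Γ S} {A B : GrMod.{u, v, w} g} (φ : GrHom A B) :
    φ.f A.zero = B.zero := by
  have h : φ.f (A.act 0 A.zero) = B.act 0 (φ.f A.zero) := φ.map_act 0 A.zero
  rw [A.act_zero] at h
  rw [h, B.act_zero]

instance grModCategory (g : Grading Γ S) : Category (GrMod.{u, v, w} g) where
  Hom A B := GrHom A B
  id A :=
    { f := id
      map_act := fun _ _ => rfl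
      graded := fun _ _ _ => rfl }
  comp {A B C} φ ψ :=
    { f := fun x => ψ.f (φ.f x)
      map_act := fun s x => by
        show ψ.f (φ.f (A.act s x)) = C.act s (ψ.f (φ.f x))
        rw [φ.map_act, ψ.map_act]
      graded := fun x hx hfx => by
        have hφ : φ.f x ≠ B.zero := fun hzero =>
          hfx (show ψ.f (φ.f x) = C.zero by rw [hzero]; exact ψ.map_zero)
        exact (ψ.graded (φ.f x) hφ hfx).trans (φ.graded x hx hφ) }
  id_comp _ := rfl
  comp_id _ := rfl
  assoc _ _ _ := rfl

/-- An object of `Mod-(S#Γ)`: a unital pointed left `S#Γ`-set. -/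
structure SmMod (g : Grading Γ S) : Type max u w (v + 1) where
  X : Type v
  zero : X
  act : Smash Γ S → X → X
  act_mul : ∀ (a b : Smash Γ S) (x : X), act a (act b x) = act (smashMul g a b) x
  act_zero : ∀ x : X, act none x = zero
  unital : ∀ x : X, ∃ (a : Smash Γ S) (y : X), act a y = x

/-- A morphism of `Mod-(S#Γ)`: an `S#Γ`-map. -/
structure SmHom {g : Grading Γ S} (A B : SmMod.{u, v, w} g) : Type v where
  f : A.X → B.X
  map_act : ∀ (a : Smash Γ S) (x : A.X), f (A.act a x) = B.act a (f x)

instance smModCategory (g : Grading Γ S) : Category (SmMod.{u, v, w} g) where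
  Hom A B := SmHom A B
  id A := { f := id, map_act := fun _ _ => rfl }
  comp {A B C} φ ψ :=
    { f := fun x => ψ.f (φ.f x)
      map_act := fun a x => by
        show ψ.f (φ.f (A.act a x)) = C.act a (ψ.f (φ.f x))
        rw [φ.map_act, ψ.map_act] }
  id_comp _ := rfl
  comp_id _ := rfl
  assoc _ _ _ := rfl

/-- The shift functor `T_α` on `Gr-S`: `X(α)_β = X_{βα}`, i.e. the degree map becomes
`x ↦ deg(x) α⁻¹`. -/
def grShift (g : Grading Γ S) (α : Γ) : GrMod.{u, v, w} g ⥤ GrMod.{u, v, w} g where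
  obj A :=
    { X := A.X
      zero := A.zero
      act := A.act
      act_mul := A.act_mul
      act_zero := A.act_zero
      unital := A.unital
      degX := fun x => A.degX x * α⁻¹
      deg_act := fun s x hx h => by
        show A.degX ⟨A.act s x, h⟩ * α⁻¹ = g.deg s * (A.degX ⟨x, hx⟩ * α⁻¹)
        rw [A.deg_act s x hx h, mul_assoc] }
  map {A B} φ :=
    { f := φ.f
      map_act := φ.map_act
      graded := fun x hx hfx => by
        show B.degX ⟨φ.f x, hfx⟩ * α⁻¹ = A.degX ⟨x, hx⟩ * α⁻¹
        rw [φ.graded x hx hfx] }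
  map_id _ := rfl
  map_comp _ _ := rfl

/-- The automorphism `τ_α : s P_β ↦ s P_{βα}` of `S#Γ`. -/
def tau (α : Γ) : Smash Γ S → Smash Γ S :=
  Option.map fun p => (p.1, p.2 * α)

theorem tau_tau (α : Γ) (a : Smash Γ S) : tau α (tau α⁻¹ a) = a := by
  cases a with
  | none => rfl
  | some p => simp [tau]

theorem smashMul_tau {g : Grading Γ S} (α : Γ) (a b : Smash Γ S) :
    smashMul g (tau α a) (tau α b) = tau α (smashMul g a b) := by
  classical
  cases a with
  | none => rfl
  | some p =>
    cases b with
    | none => rfl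
    | some q =>
      have hc : p.2 * α * (q.2 * α)⁻¹ = p.2 * q.2⁻¹ := by group
      show (if h : p.1.1 * q.1.1 ≠ 0 ∧ g.deg q.1.1 = p.2 * α * (q.2 * α)⁻¹ then
          some ((⟨p.1.1 * q.1.1, h.1⟩ : {s : S // s ≠ 0}), q.2 * α) else none) =
        tau α (if h : p.1.1 * q.1.1 ≠ 0 ∧ g.deg q.1.1 = p.2 * q.2⁻¹ then
          some ((⟨p.1.1 * q.1.1, h.1⟩ : {s : S // s ≠ 0}), q.2) else none)
      rw [hc]
      split_ifs with h
      · rfl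
      · rfl

/-- The shift functor `T_α` on `Mod-(S#Γ)`, twisting the action by `τ_α`. -/
noncomputable def smShift (g : Grading Γ S) (α : Γ) :
    SmMod.{u, v, w} g ⥤ SmMod.{u, v, w} g where
  obj A :=
    { X := A.X
      zero := A.zero
      act := fun a x => A.act (tau α a) x
      act_mul := fun a b x => by
        show A.act (tau α a) (A.act (tau α b) x) = A.act (tau α (smashMul g a b)) x
        rw [A.act_mul, smashMul_tau]
      act_zero := fun x => A.act_zero x
      unital := fun x => by
        obtain ⟨a, y, hy⟩ := A.unital x
        exact ⟨tau α⁻¹ a, y, by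
          show A.act (tau α (tau α⁻¹ a)) y = x
          rw [tau_tau]; exact hy⟩ }
  map {A B} φ :=
    { f := φ.f
      map_act := fun a x => φ.map_act (tau α a) x }
  map_id _ := rfl
  map_comp _ _ := rfl

/-!
The inverse of `F_#` has to recover the grading from the `S#Γ`-action. In a unital `S#Γ`-set
every `x` is fixed by some `u P_β` with `u` idempotent (local units), and for `x ≠ 0` the index
`β` is unique, because `deg u = 1` makes `(s P_γ)(u P_β) = 0` for `γ ≠ β`. This `β` is the
degree of `x`, and `s` acts on `x` as `s P_β`. The two constructions are inverse to each other
on the nose, and both shifts merely reindex the `P_β`.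
-/

theorem Grading.deg_eq_one_of_mul_self (g : Grading Γ S) {u : S} (hu : u ≠ 0)
    (h : u * u = u) : g.deg u = 1 := by
  have hdeg := g.deg_mul u u (by rwa [h])
  rw [h] at hdeg
  exact left_eq_mul.mp hdeg

open Classical in
/-- `s P_α`, which is `0` when `s = 0`. -/
noncomputable def toSmash (s : S) (α : Γ) : Smash Γ S :=
  if h : s ≠ 0 then some (⟨s, h⟩, α) else none

omit [Group Γ] in
theorem toSmash_of_ne_zero {s : S} (hs : s ≠ 0) (α : Γ) :
    toSmash s α = some (⟨s, hs⟩, α) :=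
  dif_pos hs

omit [Group Γ] in
@[simp]
theorem toSmash_zero (α : Γ) : toSmash (0 : S) α = none :=
  dif_neg (not_not.mpr rfl)

theorem Smash.exists_eq_toSmash (a : Smash Γ S) : ∃ (s : S) (α : Γ), a = toSmash s α := by
  rcases a with _ | ⟨⟨s, hs⟩, α⟩
  · exact ⟨0, 1, (toSmash_zero 1).symm⟩
  · exact ⟨s, α, (toSmash_of_ne_zero hs α).symm⟩

open Classical in
theorem smashMul_toSmash (g : Grading Γ S) (s t : S) (α β : Γ) :
    smashMul g (toSmash s α) (toSmash t β) =
      if g.deg t = α * β⁻¹ then toSmash (s * t) β else none := by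
  obtain rfl | hs := eq_or_ne s 0
  · simp [smashMul]
  obtain rfl | ht := eq_or_ne t 0
  · cases toSmash s α <;> simp [smashMul]
  obtain hst | hst := eq_or_ne (s * t) 0
  · simp [smashMul, toSmash_of_ne_zero hs, toSmash_of_ne_zero ht, hst]
  · rw [toSmash_of_ne_zero hs, toSmash_of_ne_zero ht, toSmash_of_ne_zero hst]
    by_cases hd : g.deg t = α * β⁻¹
    · rw [if_pos hd]
      exact dif_pos ⟨hst, hd⟩
    · rw [if_neg hd]
      exact dif_neg fun h => hd h.2

theorem tau_toSmash (α : Γ) (s : S) (β : Γ) : tau α (toSmash s β) = toSmash s (β * α) := by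
  obtain rfl | hs := eq_or_ne s 0
  · simp [tau]
  · simp [tau, toSmash_of_ne_zero hs]

attribute [ext] GrMod SmMod

namespace GrMod

variable {g : Grading Γ S}

theorem act_zero_right (A : GrMod.{u, v, w} g) (s : S) : A.act s A.zero = A.zero := by
  rw [← A.act_zero A.zero, A.act_mul, mul_zero]

/-- `x` is a nonzero element of `X_β`. -/
def HasDeg (A : GrMod.{u, v, w} g) (x : A.X) (β : Γ) : Prop :=
  ∃ hx : x ≠ A.zero, A.degX ⟨x, hx⟩ = β

variable {A : GrMod.{u, v, w} g}

theorem not_hasDeg_zero (β : Γ) : ¬A.HasDeg A.zero β :=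
  fun ⟨h, _⟩ => h rfl

theorem HasDeg.unique {x : A.X} {β γ : Γ} (hβ : A.HasDeg x β) (hγ : A.HasDeg x γ) :
    β = γ := by
  obtain ⟨_, rfl⟩ := hβ
  obtain ⟨_, rfl⟩ := hγ
  rfl

theorem HasDeg.act {x : A.X} {β : Γ} (hx : A.HasDeg x β) {s : S} (h : A.act s x ≠ A.zero) :
    A.HasDeg (A.act s x) (g.deg s * β) := by
  obtain ⟨hx, rfl⟩ := hx
  exact ⟨h, A.deg_act s x hx h⟩

theorem HasDeg.act_iff {x : A.X} {β : Γ} (hx : A.HasDeg x β) {s : S}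
    (h : A.act s x ≠ A.zero) {γ : Γ} : A.HasDeg (A.act s x) γ ↔ g.deg s = γ * β⁻¹ := by
  rw [eq_mul_inv_iff_mul_eq]
  exact ⟨(hx.act h).unique, fun e => e ▸ hx.act h⟩

theorem exists_idem_act_eq_self (hlu : HasLocalUnits S) (x : A.X) :
    ∃ u : S, u * u = u ∧ A.act u x = x := by
  obtain ⟨s, y, rfl⟩ := A.unital x
  obtain ⟨u, -, hu, -, hus, -⟩ := hlu s
  exact ⟨u, hu, by rw [A.act_mul, hus]⟩

variable (A)

open Classical in
noncomputable def smashAct : Smash Γ S → A.X → A.X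
  | none, _ => A.zero
  | some p, x => if A.HasDeg x p.2 then A.act p.1.1 x else A.zero

open Classical in
theorem smashAct_toSmash (s : S) (β : Γ) (x : A.X) :
    A.smashAct (toSmash s β) x = if A.HasDeg x β then A.act s x else A.zero := by
  obtain rfl | hs := eq_or_ne s 0
  · simp [smashAct, A.act_zero]
  · rw [toSmash_of_ne_zero hs]
    rfl

theorem smashAct_zero_right (a : Smash Γ S) : A.smashAct a A.zero = A.zero := by
  obtain ⟨s, β, rfl⟩ := a.exists_eq_toSmash
  rw [smashAct_toSmash, if_neg (not_hasDeg_zero β)]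

theorem smashAct_mul (a b : Smash Γ S) (x : A.X) :
    A.smashAct a (A.smashAct b x) = A.smashAct (smashMul g a b) x := by
  obtain ⟨s, α, rfl⟩ := a.exists_eq_toSmash
  obtain ⟨t, β, rfl⟩ := b.exists_eq_toSmash
  rw [smashMul_toSmash, smashAct_toSmash A t]
  by_cases hx : A.HasDeg x β
  · rw [if_pos hx]
    by_cases hy : A.act t x = A.zero
    · have hst : A.act (s * t) x = A.zero := by rw [← A.act_mul, hy, act_zero_right]
      rw [hy, smashAct_zero_right]
      split_ifs
      · rw [smashAct_toSmash, if_pos hx, hst]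
      · rfl
    · rw [smashAct_toSmash, hx.act_iff hy, A.act_mul]
      split_ifs
      · rw [smashAct_toSmash, if_pos hx]
      · rfl
  · rw [if_neg hx, smashAct_zero_right]
    split_ifs
    · rw [smashAct_toSmash, if_neg hx]
    · rfl

theorem exists_smashAct_eq_self (hlu : HasLocalUnits S) {x : A.X} {β : Γ}
    (hx : A.HasDeg x β) : ∃ u : S, u * u = u ∧ A.smashAct (toSmash u β) x = x := by
  obtain ⟨u, hu, hux⟩ := exists_idem_act_eq_self hlu x
  exact ⟨u, hu, by rw [smashAct_toSmash, if_pos hx, hux]⟩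

noncomputable def toSmMod (hlu : HasLocalUnits S) : SmMod.{u, v, w} g where
  X := A.X
  zero := A.zero
  act := A.smashAct
  act_mul := A.smashAct_mul
  act_zero _ := rfl
  unital x := by
    by_cases hx : x = A.zero
    · exact ⟨none, x, hx.symm⟩
    · obtain ⟨u, -, hux⟩ := A.exists_smashAct_eq_self hlu ⟨hx, rfl⟩
      exact ⟨_, x, hux⟩

theorem hasDeg_grShift_iff (α : Γ) (x : A.X) (β : Γ) :
    ((grShift g α).obj A).HasDeg x β ↔ A.HasDeg x (β * α) :=
  exists_congr fun _ => mul_inv_eq_iff_eq_mul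

open Classical in
theorem smashAct_grShift (α : Γ) (a : Smash Γ S) (x : A.X) :
    ((grShift g α).obj A).smashAct a x = A.smashAct (tau α a) x := by
  obtain ⟨s, β, rfl⟩ := a.exists_eq_toSmash
  rw [tau_toSmash, smashAct_toSmash A]
  exact (smashAct_toSmash ((grShift g α).obj A) s β x).trans (if_congr (A.hasDeg_grShift_iff α x β) rfl rfl)

end GrMod

namespace GrHom

variable {g : Grading Γ S} {A B : GrMod.{u, v, w} g}

theorem hasDeg_map_iff (φ : GrHom A B) {x : A.X} (hfx : φ.f x ≠ B.zero) (β : Γ) :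
    B.HasDeg (φ.f x) β ↔ A.HasDeg x β := by
  have hx : x ≠ A.zero := fun h => hfx (h ▸ φ.map_zero)
  exact ⟨fun ⟨_, h⟩ => ⟨hx, (φ.graded x hx hfx).symm.trans h⟩,
    fun ⟨_, h⟩ => ⟨hfx, (φ.graded x hx hfx).trans h⟩⟩

theorem map_smashAct (φ : GrHom A B) (a : Smash Γ S) (x : A.X) :
    φ.f (A.smashAct a x) = B.smashAct a (φ.f x) := by
  obtain ⟨s, β, rfl⟩ := a.exists_eq_toSmash
  rw [A.smashAct_toSmash, B.smashAct_toSmash, apply_ite φ.f, φ.map_act, φ.map_zero]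
  by_cases hfx : φ.f x = B.zero
  · simp [hfx, B.act_zero_right, GrMod.not_hasDeg_zero]
  · rw [φ.hasDeg_map_iff hfx]

theorem hext {A' B' : GrMod.{u, v, w} g} (hA : A = A') (hB : B = B') {φ : GrHom A B}
    {ψ : GrHom A' B'} (h : HEq φ.f ψ.f) : HEq φ ψ := by
  subst hA hB
  cases φ
  cases ψ
  cases eq_of_heq h
  rfl

end GrHom

namespace SmMod

variable {g : Grading Γ S} (B : SmMod.{u, v, w} g)

theorem act_zero_right (a : Smash Γ S) : B.act a B.zero = B.zero := by
  rw [← B.act_zero B.zero, B.act_mul]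
  cases a <;> rfl

def IsDeg (x : B.X) (β : Γ) : Prop :=
  ∃ u : S, u * u = u ∧ B.act (toSmash u β) x = x

theorem act_toSmash_act_toSmash (s t : S) (β : Γ) (x : B.X) :
    B.act (toSmash s (g.deg t * β)) (B.act (toSmash t β) x) = B.act (toSmash (s * t) β) x := by
  rw [B.act_mul, smashMul_toSmash, if_pos (mul_inv_cancel_right _ _).symm]

variable {B}

theorem IsDeg.act_toSmash_of_ne {x : B.X} {γ : Γ} (hx : B.IsDeg x γ) {β : Γ} (hne : β ≠ γ)
    (s : S) : B.act (toSmash s β) x = B.zero := by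
  obtain ⟨u, hu, hux⟩ := hx
  rw [← hux, B.act_mul, smashMul_toSmash]
  split_ifs with h
  · obtain rfl | hu0 := eq_or_ne u 0
    · rw [mul_zero, toSmash_zero, B.act_zero]
    · rw [g.deg_eq_one_of_mul_self hu0 hu, eq_comm, mul_inv_eq_one] at h
      exact absurd h hne
  · exact B.act_zero _

theorem IsDeg.unique {x : B.X} (hx : x ≠ B.zero) {β γ : Γ} (hβ : B.IsDeg x β)
    (hγ : B.IsDeg x γ) : β = γ := by
  by_contra hne
  obtain ⟨u, -, hux⟩ := hβ
  exact hx (hux.symm.trans (hγ.act_toSmash_of_ne hne u))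

theorem IsDeg.map {A : SmMod.{u, v, w} g} (φ : SmHom A B) {x : A.X} {β : Γ}
    (h : A.IsDeg x β) : B.IsDeg (φ.f x) β := by
  obtain ⟨u, hu, hux⟩ := h
  exact ⟨u, hu, by rw [← φ.map_act, hux]⟩

variable (B)

theorem isDeg_act_toSmash (hlu : HasLocalUnits S) (s : S) (β : Γ) (x : B.X) :
    B.IsDeg (B.act (toSmash s β) x) (g.deg s * β) := by
  obtain ⟨u, -, hu, -, hus, -⟩ := hlu s
  exact ⟨u, hu, by rw [act_toSmash_act_toSmash, hus]⟩

theorem exists_isDeg (hlu : HasLocalUnits S) (x : B.X) : ∃ β : Γ, B.IsDeg x β := by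
  obtain ⟨a, y, rfl⟩ := B.unital x
  obtain ⟨s, β, rfl⟩ := a.exists_eq_toSmash
  exact ⟨_, B.isDeg_act_toSmash hlu s β y⟩

/-- The degree of `x`; meaningful only for `x ≠ 0`. -/
noncomputable def degOf (hlu : HasLocalUnits S) (x : B.X) : Γ :=
  (B.exists_isDeg hlu x).choose

theorem isDeg_degOf (hlu : HasLocalUnits S) (x : B.X) : B.IsDeg x (B.degOf hlu x) :=
  (B.exists_isDeg hlu x).choose_spec

variable {B}

theorem degOf_eq (hlu : HasLocalUnits S) {x : B.X} (hx : x ≠ B.zero) {β : Γ} (h : B.IsDeg x β) : B.degOf hlu x = β :=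
  (B.isDeg_degOf hlu x).unique hx h

theorem act_toSmash_degOf (hlu : HasLocalUnits S) {x : B.X} {β : Γ} (h : B.IsDeg x β) (s : S) :
    B.act (toSmash s (B.degOf hlu x)) x = B.act (toSmash s β) x := by
  obtain rfl | hx := eq_or_ne x B.zero
  · rw [act_zero_right, act_zero_right]
  · rw [degOf_eq hlu hx h]

variable (B)

noncomputable def grAct (hlu : HasLocalUnits S) (s : S) (x : B.X) : B.X :=
  B.act (toSmash s (B.degOf hlu x)) x

theorem grAct_mul (hlu : HasLocalUnits S) (s t : S) (x : B.X) :
    B.grAct hlu s (B.grAct hlu t x) = B.grAct hlu (s * t) x := by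
  rw [grAct, grAct, grAct, ← act_toSmash_act_toSmash]
  exact act_toSmash_degOf hlu (B.isDeg_act_toSmash hlu t _ x) s

noncomputable def toGrMod (hlu : HasLocalUnits S) : GrMod.{u, v, w} g where
  X := B.X
  zero := B.zero
  act := B.grAct hlu
  act_mul := B.grAct_mul hlu
  act_zero x := by rw [grAct, toSmash_zero, B.act_zero]
  unital x := by
    obtain ⟨u, -, hux⟩ := B.isDeg_degOf hlu x
    exact ⟨u, x, hux⟩
  degX x := B.degOf hlu x.1
  deg_act s x _ h := degOf_eq hlu h (B.isDeg_act_toSmash hlu s _ x)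

end SmMod

namespace SmHom

variable {g : Grading Γ S} {A B : SmMod.{u, v, w} g}

theorem map_zero (φ : SmHom A B) : φ.f A.zero = B.zero := by
  rw [← A.act_zero A.zero, φ.map_act, B.act_zero]

theorem map_grAct (hlu : HasLocalUnits S) (φ : SmHom A B) (s : S) (x : A.X) :
    φ.f (A.grAct hlu s x) = B.grAct hlu s (φ.f x) := by
  rw [SmMod.grAct, SmMod.grAct, φ.map_act,
    SmMod.act_toSmash_degOf hlu ((A.isDeg_degOf hlu x).map φ)]

theorem hext {A' B' : SmMod.{u, v, w} g} (hA : A = A') (hB : B = B') {φ : SmHom A B}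
    {ψ : SmHom A' B'} (h : HEq φ.f ψ.f) : HEq φ ψ := by
  subst hA hB
  cases φ
  cases ψ
  cases eq_of_heq h
  rfl

end SmHom

section Functors

variable (g : Grading Γ S) (hlu : HasLocalUnits S)

/-- The functor `F_#`. -/
noncomputable def grModToSmMod : GrMod.{u, v, w} g ⥤ SmMod.{u, v, w} g where
  obj A := A.toSmMod hlu
  map φ := { f := φ.f, map_act := GrHom.map_smashAct φ }
  map_id _ := rfl
  map_comp _ _ := rfl

noncomputable def smModToGrMod : SmMod.{u, v, w} g ⥤ GrMod.{u, v, w} g where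
  obj B := B.toGrMod hlu
  map {A _} φ :=
    { f := φ.f
      map_act := SmHom.map_grAct hlu φ
      graded := fun x _ hfx =>
        SmMod.degOf_eq hlu hfx ((A.isDeg_degOf hlu x).map φ) }
  map_id _ := rfl
  map_comp _ _ := rfl

variable {g}

theorem GrMod.toGrMod_toSmMod (A : GrMod.{u, v, w} g) : (A.toSmMod hlu).toGrMod hlu = A := by
  have hdeg {x : A.X} {β : Γ} (hx : A.HasDeg x β) : (A.toSmMod hlu).degOf hlu x = β := by
    obtain ⟨u, hu, hux⟩ := A.exists_smashAct_eq_self hlu hx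
    exact SmMod.degOf_eq hlu hx.1 ⟨u, hu, hux⟩
  refine GrMod.ext rfl HEq.rfl (heq_of_eq (funext₂ fun s x => ?_))
    (heq_of_eq (funext fun x => hdeg ⟨x.2, rfl⟩))
  by_cases hx : x = A.zero
  · subst hx
    exact ((A.toSmMod hlu).act_zero_right _).trans (A.act_zero_right s).symm
  · show A.smashAct (toSmash s ((A.toSmMod hlu).degOf hlu x)) x = A.act s x
    rw [hdeg ⟨hx, rfl⟩]
    exact (A.smashAct_toSmash s _ x).trans (if_pos ⟨hx, rfl⟩)

theorem SmMod.toSmMod_toGrMod (B : SmMod.{u, v, w} g) : (B.toGrMod hlu).toSmMod hlu = B := by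
  refine SmMod.ext rfl HEq.rfl (heq_of_eq (funext₂ fun a x => ?_))
  obtain ⟨s, β, rfl⟩ := a.exists_eq_toSmash
  refine ((B.toGrMod hlu).smashAct_toSmash s β x).trans ?_
  split_ifs with h
  · obtain ⟨_, hβ⟩ := h
    exact congrArg (fun γ => B.act (toSmash s γ) x) hβ
  · obtain rfl | hx := eq_or_ne x B.zero
    · exact (B.act_zero_right _).symm
    · exact ((B.isDeg_degOf hlu x).act_toSmash_of_ne (fun e => h ⟨hx, e.symm⟩) s).symm

theorem GrMod.toSmMod_grShift (α : Γ) (A : GrMod.{u, v, w} g) :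
    ((grShift g α).obj A).toSmMod hlu = (smShift g α).obj (A.toSmMod hlu) :=
  SmMod.ext rfl HEq.rfl (heq_of_eq (funext₂ (A.smashAct_grShift α)))

variable (g)

theorem grModToSmMod_comp_smModToGrMod :
    grModToSmMod g hlu ⋙ smModToGrMod g hlu = 𝟭 (GrMod.{u, v, w} g) :=
  Functor.hext (GrMod.toGrMod_toSmMod hlu) fun A B _ =>
    GrHom.hext (A.toGrMod_toSmMod hlu) (B.toGrMod_toSmMod hlu) HEq.rfl

theorem smModToGrMod_comp_grModToSmMod :
    smModToGrMod g hlu ⋙ grModToSmMod g hlu = 𝟭 (SmMod.{u, v, w} g) :=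
  Functor.hext (SmMod.toSmMod_toGrMod hlu) fun A B _ =>
    SmHom.hext (A.toSmMod_toGrMod hlu) (B.toSmMod_toGrMod hlu) HEq.rfl

theorem grShift_comp_grModToSmMod (α : Γ) :
    grShift g α ⋙ grModToSmMod g hlu = grModToSmMod g hlu ⋙ smShift g α :=
  Functor.hext (GrMod.toSmMod_grShift hlu α) fun A B _ =>
    SmHom.hext (A.toSmMod_grShift hlu α) (B.toSmMod_grShift hlu α) HEq.rfl

end Functors

/-- Theorem `smashthrm` (Cohen–Montgomery for semigroups): for a `Γ`-graded semigroup
`S` with local units, there is an isomorphism of categories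
`F_# : Gr-S → Mod-(S#Γ)` commuting with the shift functors `T_α` on both sides. -/
theorem smash_product_category_iso (g : Grading Γ S) (hlu : HasLocalUnits S) :
    ∃ (F : GrMod.{u, v, w} g ⥤ SmMod.{u, v, w} g)
      (G : SmMod.{u, v, w} g ⥤ GrMod.{u, v, w} g),
      F ⋙ G = 𝟭 (GrMod.{u, v, w} g) ∧ G ⋙ F = 𝟭 (SmMod.{u, v, w} g) ∧
      ∀ α : Γ, grShift g α ⋙ F = F ⋙ smShift g α :=
  ⟨grModToSmMod g hlu, smModToGrMod g hlu, grModToSmMod_comp_smModToGrMod g hlu,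
    smModToGrMod_comp_grModToSmMod g hlu, grShift_comp_grModToSmMod g hlu⟩
end

section
/- Let E be a directed graph with a weight function ω : E¹ → Γ and let Ē be the covering graph of E with respect to ω. Then the assignments v_α ↦ v P_α, e_α ↦ e P_{ω(e)⁻¹α}, e_α⁻¹ ↦ e⁻¹ P_α induce a graded semigroup isomorphism φ : S(Ē) → S(E)#Γ. -/
/-! Graph inverse semigroups (modelled concretely, see §7 of the paper), covering
graphs, and smash products.  A graph is given by `src rng : E → V`; a nonzero element
of `S(E)` is uniquely `x y⁻¹` for paths `x, y` with `r(x) = r(y)` (pairs of (starting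
vertex, edge list) pairs); `none` is the zero, and `ValidGIS` carves out `S(E)` inside
the raw carrier. -/

variable {V : Type u} {E : Type u}

/-- `goodFrom src rng v l`: the edge list `l` forms a path starting at the vertex `v`. -/
def goodFrom (src rng : E → V) : V → List E → Prop
  | _, [] => True
  | v, e :: l => src e = v ∧ goodFrom src rng (rng e) l

/-- The end (range) vertex of the path starting at `v` with edge list `l`. -/
def pend (rng : E → V) : V → List E → V
  | v, [] => v
  | _, e :: l => pend rng (rng e) l

/-- Raw carrier for the graph inverse semigroup `S(E)`. -/
abbrev RawGIS (V E : Type u) : Type u := Option ((V × List E) × (V × List E))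

/-- Validity of a raw element. -/
def ValidGIS (src rng : E → V) : RawGIS V E → Prop
  | none => True
  | some (x, y) =>
      goodFrom src rng x.1 x.2 ∧ goodFrom src rng y.1 y.2 ∧
        pend rng x.1 x.2 = pend rng y.1 y.2

open Classical in
/-- Multiplication in `S(E)`. -/
noncomputable def gmul : RawGIS V E → RawGIS V E → RawGIS V E
  | some (x, y), some (u, w) =>
      if y.1 = u.1 ∧ y.2 <+: u.2 then
        some ((x.1, x.2 ++ u.2.drop y.2.length), w)
      else if u.1 = y.1 ∧ u.2 <+: y.2 then
        some (x, (w.1, w.2 ++ y.2.drop u.2.length))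
      else none
  | _, _ => none

/-- The weight of a path: the product of the weights of its edges. -/
def wpath {Γ : Type u} [Group Γ] (ω : E → Γ) (l : List E) : Γ := (l.map ω).prod

/-- The `Γ`-grading of `S(E)` induced by a weight map `ω : E¹ → Γ`:
`deg (x y⁻¹) = ω(x) ω(y)⁻¹`. -/
def degW {Γ : Type u} [Group Γ] (ω : E → Γ) : RawGIS V E → Γ
  | some (x, y) => wpath ω x.2 * (wpath ω y.2)⁻¹
  | none => 1

/-- Raw carrier for the smash product `S(E)#Γ`: symbols `s P_α` with `s` a (raw)
nonzero element of `S(E)` and `α ∈ Γ`, plus the zero `none`. -/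
abbrev SmashGIS (V E Γ : Type u) : Type u :=
  Option (((V × List E) × (V × List E)) × Γ)

/-- Validity in `S(E)#Γ`. -/
def ValidSmash (src rng : E → V) {Γ : Type u} : SmashGIS V E Γ → Prop
  | none => True
  | some (p, _) => ValidGIS src rng (some p)

open Classical in
/-- Multiplication in `S(E)#Γ`: `(s P_α)(t P_β) = st P_β` if `st ≠ 0` and
`deg t = αβ⁻¹`, else `0`. -/
noncomputable def smashGISMul {Γ : Type u} [Group Γ] (ω : E → Γ) :
    SmashGIS V E Γ → SmashGIS V E Γ → SmashGIS V E Γ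
  | some (p, α), some (q, β) =>
      match gmul (some p) (some q) with
      | some pq => if degW ω (some q) = α * β⁻¹ then some (pq, β) else none
      | none => none
  | _, _ => none

/-- The grading of `S(E)#Γ`: `deg (s P_α) = deg s`. -/
def degSmash {Γ : Type u} [Group Γ] (ω : E → Γ) : SmashGIS V E Γ → Γ
  | some (p, _) => degW ω (some p)
  | none => 1

/-- The map `φ : S(Ē) → S(E)#Γ` induced by `v_α ↦ v P_α`, `e_α ↦ e P_{ω(e)⁻¹α}`,
`e_α⁻¹ ↦ e⁻¹ P_α`.  On a general element `x̄ ȳ⁻¹` of `S(Ē)` (where `Ē` is the covering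
graph, with vertices `V × Γ` and edges `E × Γ`) it forgets the `Γ`-coordinates of the
two paths and records the `Γ`-coordinate of the starting vertex of `ȳ`. -/
def coverProj {V E Γ : Type u} : RawGIS (V × Γ) (E × Γ) → SmashGIS V E Γ :=
  Option.map fun p =>
    (((p.1.1.1, p.1.2.map Prod.fst), (p.2.1.1, p.2.2.map Prod.fst)), p.2.1.2)


/-! A path in the covering graph `Ē` is determined by its starting vertex `v_α` and its
projection `x` to `E` (unique path lifting), and it ends at `r(x)_{ω(x)⁻¹α}`. Hence a nonzero
`x̄ ȳ⁻¹ ∈ S(Ē)` is determined by `x y⁻¹` together with the `Γ`-coordinate `α` of the start of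
`ȳ`: the start of `x̄` is forced to be `s(x)_{ω(x)ω(y)⁻¹α}`. Lifting back is therefore an
inverse of `φ`. A product of two lifts `(x̄ ȳ⁻¹)(ū w̄⁻¹)` can only be nonzero when `ȳ` and `ū`
start at the same `Γ`-coordinate, and for the lift of `u w⁻¹ P_β` that coordinate is
`deg(u w⁻¹) β`: this is exactly the degree condition of the smash product. -/

lemma gmul_eq_none_of_fst_ne {x y u w : V × List E} (h : y.1 ≠ u.1) :
    gmul (some (x, y)) (some (u, w)) = none := by
  simp [gmul, h, Ne.symm h]

lemma smashGISMul_of_degW_eq {Γ : Type u} [Group Γ] (ω : E → Γ)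
    {p q : (V × List E) × (V × List E)} {α β : Γ} (h : degW ω (some q) = α * β⁻¹) :
    smashGISMul ω (some (p, α)) (some (q, β)) = (gmul (some p) (some q)).map (·, β) := by
  rcases hpq : gmul (some p) (some q) with _ | pq <;> simp [smashGISMul, hpq, h]

lemma smashGISMul_of_degW_ne {Γ : Type u} [Group Γ] (ω : E → Γ)
    {p q : (V × List E) × (V × List E)} {α β : Γ} (h : degW ω (some q) ≠ α * β⁻¹) :
    smashGISMul ω (some (p, α)) (some (q, β)) = none := by
  rcases hpq : gmul (some p) (some q) with _ | pq <;> simp [smashGISMul, hpq, h]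

lemma degW_mul_eq_iff {Γ : Type u} [Group Γ] (ω : E → Γ) {x y : V × List E} {α β : Γ} :
    degW ω (some (x, y)) * β = α ↔ (wpath ω x.2)⁻¹ * α = (wpath ω y.2)⁻¹ * β := by
  rw [degW, inv_mul_eq_iff_eq_mul, mul_assoc, eq_comm]

def coverSrc {Γ : Type u} (src : E → V) : E × Γ → V × Γ := fun e => (src e.1, e.2)

section Covering

variable {Γ : Type u} [Group Γ] (src rng : E → V) (ω : E → Γ)

def coverRng : E × Γ → V × Γ := fun e => (rng e.1, (ω e.1)⁻¹ * e.2)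

def liftEdges : Γ → List E → List (E × Γ)
  | _, [] => []
  | α, e :: l => (e, α) :: liftEdges ((ω e)⁻¹ * α) l

def liftPath (α : Γ) (p : V × List E) : (V × Γ) × List (E × Γ) :=
  ((p.1, α), liftEdges ω α p.2)

def projPath (p : (V × Γ) × List (E × Γ)) : V × List E := (p.1.1, p.2.map Prod.fst)

def coverLift : SmashGIS V E Γ → RawGIS (V × Γ) (E × Γ) :=
  Option.map fun s => (liftPath ω (degW ω (some s.1) * s.2) s.1.1, liftPath ω s.2 s.1.2)

omit [Group Γ] in
lemma coverProj_some (p q : (V × Γ) × List (E × Γ)) :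
    coverProj (some (p, q)) = some ((projPath p, projPath q), q.1.2) := rfl

@[simp]
lemma map_fst_liftEdges (α : Γ) (l : List E) : (liftEdges ω α l).map Prod.fst = l := by
  induction l generalizing α with
  | nil => rfl
  | cons e l ih => simp [liftEdges, ih]

@[simp]
lemma length_liftEdges (α : Γ) (l : List E) : (liftEdges ω α l).length = l.length := by
  rw [← List.length_map Prod.fst, map_fst_liftEdges]

@[simp]
lemma projPath_liftPath (α : Γ) (p : V × List E) : projPath (liftPath ω α p) = p := by
  simp [projPath, liftPath]

lemma liftEdges_prefix_iff (α : Γ) (l₁ l₂ : List E) :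
    liftEdges ω α l₁ <+: liftEdges ω α l₂ ↔ l₁ <+: l₂ := by
  induction l₁ generalizing α l₂ with
  | nil => simp [liftEdges]
  | cons e l₁ ih =>
    cases l₂ with
    | nil => simp [liftEdges]
    | cons f l₂ =>
      simp only [liftEdges, List.cons_prefix_cons, Prod.mk.injEq, and_true]
      constructor
      · rintro ⟨rfl, h⟩
        exact ⟨rfl, (ih _ _).1 h⟩
      · rintro ⟨rfl, h⟩
        exact ⟨rfl, (ih _ _).2 h⟩

lemma goodFrom_cover_iff {v : V} {α : Γ} {l : List (E × Γ)} :
    goodFrom (coverSrc src) (coverRng rng ω) (v, α) l ↔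
      goodFrom src rng v (l.map Prod.fst) ∧ liftEdges ω α (l.map Prod.fst) = l := by
  induction l generalizing v α with
  | nil => simp [goodFrom, liftEdges]
  | cons e l ih =>
    obtain ⟨e, β⟩ := e
    simp only [goodFrom, coverSrc, coverRng, ih, List.map_cons, liftEdges, Prod.mk.injEq,
      List.cons.injEq, true_and]
    constructor
    · rintro ⟨⟨hv, rfl⟩, hg, hl⟩
      exact ⟨⟨hv, hg⟩, rfl, hl⟩
    · rintro ⟨⟨hv, hg⟩, rfl, hl⟩
      exact ⟨⟨hv, rfl⟩, hg, hl⟩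

lemma pend_cover_liftEdges (v : V) (α : Γ) (l : List E) :
    pend (coverRng rng ω) (v, α) (liftEdges ω α l) = (pend rng v l, (wpath ω l)⁻¹ * α) := by
  induction l generalizing v α with
  | nil => simp [liftEdges, pend, wpath]
  | cons e l ih => simp [liftEdges, pend, coverRng, ih, wpath, mul_assoc]

lemma coverProj_coverLift (b : SmashGIS V E Γ) : coverProj (coverLift ω b) = b := by
  rcases b with _ | ⟨⟨x, y⟩, α⟩
  · rfl
  · simp [coverLift, coverProj_some, liftPath, projPath]

lemma validGIS_cover_iff (a : RawGIS (V × Γ) (E × Γ)) :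
    ValidGIS (coverSrc src) (coverRng rng ω) a ↔
      ValidSmash src rng (coverProj a) ∧ coverLift ω (coverProj a) = a := by
  rcases a with _ | ⟨⟨⟨vx, αx⟩, lx⟩, ⟨vy, αy⟩, ly⟩
  · simp [ValidGIS, ValidSmash, coverProj, coverLift]
  · simp only [ValidGIS, ValidSmash, coverProj_some, coverLift, Option.map_some,
      Option.some.injEq, goodFrom_cover_iff, projPath, liftPath, Prod.mk.injEq, true_and]
    constructor
    · rintro ⟨⟨hx, hlx⟩, ⟨hy, hly⟩, hend⟩
      rw [← hlx, ← hly, pend_cover_liftEdges, pend_cover_liftEdges, Prod.mk.injEq] at hend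
      have hα := (degW_mul_eq_iff ω (x := (vx, lx.map Prod.fst)) (y := (vy, ly.map Prod.fst))).2
        hend.2
      exact ⟨⟨hx, hy, hend.1⟩, ⟨hα, by rw [hα, hlx]⟩, hly⟩
    · rintro ⟨⟨hx, hy, hend⟩, ⟨hα, hlx⟩, hly⟩
      rw [hα] at hlx
      refine ⟨⟨hx, hlx⟩, ⟨hy, hly⟩, ?_⟩
      have hendx := pend_cover_liftEdges rng ω vx αx (lx.map Prod.fst)
      have hendy := pend_cover_liftEdges rng ω vy αy (ly.map Prod.fst)
      rw [hlx] at hendx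
      rw [hly] at hendy
      rw [hendx, hendy, hend, (degW_mul_eq_iff ω).1 hα]

lemma coverLift_coverProj {a : RawGIS (V × Γ) (E × Γ)}
    (ha : ValidGIS (coverSrc src) (coverRng rng ω) a) : coverLift ω (coverProj a) = a :=
  ((validGIS_cover_iff src rng ω a).1 ha).2

lemma validGIS_cover_coverLift {b : SmashGIS V E Γ} (hb : ValidSmash src rng b) :
    ValidGIS (coverSrc src) (coverRng rng ω) (coverLift ω b) := by
  rw [validGIS_cover_iff, coverProj_coverLift]
  exact ⟨hb, rfl⟩

lemma coverProj_gmul_liftPath (x w : (V × Γ) × List (E × Γ)) (α : Γ) (y u : V × List E) :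
    coverProj (gmul (some (x, liftPath ω α y)) (some (liftPath ω α u, w)))
      = (gmul (some (projPath x, y)) (some (u, projPath w))).map (·, w.1.2) := by
  have key : ∀ p q : V × List E,
      ((liftPath ω α p).1 = (liftPath ω α q).1 ∧ (liftPath ω α p).2 <+: (liftPath ω α q).2) ↔
        (p.1 = q.1 ∧ p.2 <+: q.2) :=
    fun p q => by simp [liftPath, liftEdges_prefix_iff]
  simp only [gmul]
  by_cases hyu : y.1 = u.1 ∧ y.2 <+: u.2
  · rw [if_pos ((key y u).2 hyu), if_pos hyu]
    simp [coverProj_some, projPath, liftPath, List.map_drop]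
  rw [if_neg (mt (key y u).1 hyu), if_neg hyu]
  by_cases huy : u.1 = y.1 ∧ u.2 <+: y.2
  · rw [if_pos ((key u y).2 huy), if_pos huy]
    simp [coverProj_some, projPath, liftPath, List.map_drop]
  rw [if_neg (mt (key u y).1 huy), if_neg huy]
  rfl

lemma coverProj_gmul_coverLift (s t : SmashGIS V E Γ) :
    coverProj (gmul (coverLift ω s) (coverLift ω t)) = smashGISMul ω s t := by
  rcases s with _ | ⟨⟨x, y⟩, α⟩
  · rfl
  rcases t with _ | ⟨⟨u, w⟩, β⟩
  · rfl
  simp only [coverLift, Option.map_some]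
  by_cases hdeg : degW ω (some (u, w)) = α * β⁻¹
  · obtain rfl : degW ω (some (u, w)) * β = α := eq_mul_inv_iff_mul_eq.1 hdeg
    rw [smashGISMul_of_degW_eq ω hdeg, coverProj_gmul_liftPath, projPath_liftPath,
      projPath_liftPath]
    rfl
  · have hmid : (liftPath ω α y).1 ≠ (liftPath ω (degW ω (some (u, w)) * β) u).1 :=
      fun h => hdeg (eq_mul_inv_iff_mul_eq.2 (congrArg Prod.snd h).symm)
    rw [gmul_eq_none_of_fst_ne hmid, smashGISMul_of_degW_ne ω hdeg]
    rfl

lemma degSmash_coverProj (a : RawGIS (V × Γ) (E × Γ)) :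
    degSmash ω (coverProj a) = degW (fun e => ω e.1) a := by
  rcases a with _ | ⟨x, y⟩
  · rfl
  · simp [coverProj, degSmash, degW, wpath, Function.comp_def]

end Covering

/-- Theorem `gdhfthfhfhdsjje`: for a graph `E` with weight function `ω : E¹ → Γ` and
covering graph `Ē` (vertices `V × Γ`, edges `E × Γ`, `s(e_α) = s(e)_α`,
`r(e_α) = r(e)_{ω(e)⁻¹α}`), the assignments `v_α ↦ v P_α`, `e_α ↦ e P_{ω(e)⁻¹α}`,
`e_α⁻¹ ↦ e⁻¹ P_α` induce a graded semigroup isomorphism `S(Ē) ≅ S(E)#Γ`: the induced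
map `coverProj` is a degree-preserving multiplicative bijection from `S(Ē)` onto
`S(E)#Γ`. -/
theorem covering_graph_smash_iso {V E Γ : Type u} [Group Γ]
    (src rng : E → V) (ω : E → Γ) :
    Set.BijOn coverProj
        {a : RawGIS (V × Γ) (E × Γ) |
          ValidGIS (fun e => (src e.1, e.2)) (fun e => (rng e.1, (ω e.1)⁻¹ * e.2)) a}
        {b : SmashGIS V E Γ | ValidSmash src rng b} ∧
    (∀ a b : RawGIS (V × Γ) (E × Γ),
        ValidGIS (fun e => (src e.1, e.2)) (fun e => (rng e.1, (ω e.1)⁻¹ * e.2)) a →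
        ValidGIS (fun e => (src e.1, e.2)) (fun e => (rng e.1, (ω e.1)⁻¹ * e.2)) b →
        coverProj (gmul a b) = smashGISMul ω (coverProj a) (coverProj b)) ∧
    (∀ a : RawGIS (V × Γ) (E × Γ),
        ValidGIS (fun e => (src e.1, e.2)) (fun e => (rng e.1, (ω e.1)⁻¹ * e.2)) a →
        a ≠ none →
        degSmash ω (coverProj a) = degW (fun e => ω e.1) a) := by
  refine ⟨?_, fun a b ha hb => ?_, fun a _ _ => degSmash_coverProj ω a⟩
  · exact Set.InvOn.bijOn
      ⟨fun a ha => coverLift_coverProj src rng ω ha, fun b _ => coverProj_coverLift ω b⟩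
      (fun a ha => ((validGIS_cover_iff src rng ω a).1 ha).1)
      (fun b hb => validGIS_cover_coverLift src rng ω hb)
  · have h := coverProj_gmul_coverLift ω (coverProj a) (coverProj b)
    rwa [coverLift_coverProj src rng ω ha, coverLift_coverProj src rng ω hb] at h
end
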